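/- arXiv:1407.2218 — 2 statements merged into one kernel-verified Lean document; each statement's English description precedes it below -/
import Mathlib

section
/- Let $m>1$ and $K>0$. Define for $n\in\mathbb{N}$ the function $\Phi_n:\mathbb{R}\to\mathbb{R}$ by $\Phi_n(s)=\frac{m}{2}n^{-m}|s|^2\operatorname{sign}(s)$ for $|s|\le 1/n$ and $\Phi_n(s)=\left[(m-1)n^{-m}(|s|-\tfrac1n)+\frac{1}{m+1}(|s|^{m+1}-n^{-(m+1)})\right]\operatorname{sign}(s)$ for $\frac1n\le|s|\le n$. Then there is a constant $C_4=C_4(m,K)$ such that for all $n_1,n_2\ge n$ and all $s_1,s_2$ with $|s_1|,|s_2|\le K$: $$\frac{1}{m+1}\big| |s_1|^m s_1 - |s_2|^m s_2 \big| \le C_4 n^{-m} + |\Phi_{n_1}(s_1)-\Phi_{n_2}(s_2)|.$$ -/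
/-- The regularized primitive `Φ_n(s) = ∫_0^s |A_n|` of the porous-medium approximation. -/
noncomputable def Phi (m : ℝ) (n : ℕ) (s : ℝ) : ℝ :=
  if |s| ≤ 1 / (n:ℝ) then m / 2 * (n:ℝ) ^ (-m) * |s| ^ 2 * Real.sign s
  else ((m - 1) * (n:ℝ) ^ (-m) * (|s| - 1/(n:ℝ)) +
        1/(m+1) * (|s| ^ (m+1) - (n:ℝ) ^ (-(m+1)))) * Real.sign s

lemma abs_sign_le (s : ℝ) : |Real.sign s| ≤ 1 := by
  rcases lt_trichotomy s 0 with h|h|h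
  · simp [Real.sign_of_neg h]
  · simp [h]
  · simp [Real.sign_of_pos h]

lemma sign_mul_abs' (s : ℝ) : Real.sign s * |s| = s := by
  rcases lt_trichotomy s 0 with h|h|h
  · rw [Real.sign_of_neg h, abs_of_neg h]; ring
  · simp [h]
  · rw [Real.sign_of_pos h, abs_of_pos h]; ring

lemma key (m K : ℝ) (hm : 1 < m) (hK : 0 < K) (n : ℕ) (hn : 1 ≤ n) (hKn : K ≤ (n:ℝ))
    (s : ℝ) (hs : |s| ≤ K) :
    |Phi m n s - 1/(m+1) * (|s| ^ m * s)| ≤ (m + (m-1)*K + 2) * (n:ℝ) ^ (-m) := by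
  have hN1 : (1:ℝ) ≤ (n:ℝ) := by exact_mod_cast hn
  have hN0 : (0:ℝ) < (n:ℝ) := by linarith
  have hNm : (0:ℝ) < (n:ℝ) ^ (-m) := Real.rpow_pos_of_pos hN0 _
  have hm1 : (0:ℝ) < m + 1 := by linarith
  have hsgn := abs_sign_le s
  have hsgn0 := abs_nonneg (Real.sign s)
  have hsa : (0:ℝ) ≤ |s| := abs_nonneg s
  have hKnn : (0:ℝ) ≤ (m-1)*K*(n:ℝ)^(-m) :=
    mul_nonneg (mul_nonneg (by linarith) hK.le) hNm.le
  unfold Phi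
  by_cases h : |s| ≤ 1 / (n:ℝ)
  · rw [if_pos h]
    have hs1 : |s| ≤ 1 := le_trans h (by rw [div_le_one hN0]; exact hN1)
    have h1 : |s| ^ m ≤ (n:ℝ) ^ (-m) := by
      calc |s| ^ m ≤ (1/(n:ℝ)) ^ m := Real.rpow_le_rpow hsa h (by linarith)
        _ = (n:ℝ) ^ (-m) := by
            rw [one_div, Real.inv_rpow hN0.le, ← Real.rpow_neg hN0.le]
    have h2 : |s| ^ 2 ≤ 1 := by nlinarith
    have hrm : (0:ℝ) ≤ |s| ^ m := Real.rpow_nonneg hsa m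
    have t1 : m / 2 * (n:ℝ) ^ (-m) * |s| ^ 2 ≤ m/2 * (n:ℝ)^(-m) := by
      nlinarith [mul_nonneg (by positivity : (0:ℝ) ≤ m/2*(n:ℝ)^(-m))
        (by linarith : (0:ℝ) ≤ 1 - |s|^2)]
    have key1 : |m / 2 * (n:ℝ) ^ (-m) * |s| ^ 2 * Real.sign s| ≤ m/2 * (n:ℝ)^(-m) := by
      rw [abs_mul, abs_of_nonneg (by positivity : (0:ℝ) ≤ m / 2 * (n:ℝ) ^ (-m) * |s| ^ 2)]
      calc m / 2 * (n:ℝ) ^ (-m) * |s| ^ 2 * |Real.sign s|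
          ≤ m / 2 * (n:ℝ) ^ (-m) * |s| ^ 2 * 1 :=
            mul_le_mul_of_nonneg_left hsgn (by positivity)
        _ = m / 2 * (n:ℝ) ^ (-m) * |s| ^ 2 := mul_one _
        _ ≤ m/2 * (n:ℝ)^(-m) := t1
    have key2 : |1/(m+1) * (|s| ^ m * s)| ≤ (n:ℝ)^(-m) := by
      rw [abs_mul, abs_mul, abs_of_nonneg hrm,
        abs_of_pos (by positivity : (0:ℝ) < 1/(m+1))]
      have e2 : |s|^m * |s| ≤ (n:ℝ)^(-m) * 1 := mul_le_mul h1 hs1 hsa hNm.le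
      rw [mul_one] at e2
      calc 1/(m+1) * (|s|^m * |s|) ≤ 1 * (n:ℝ)^(-m) := by
            apply mul_le_mul _ e2 (by positivity) zero_le_one
            rw [div_le_one hm1]; linarith
        _ = (n:ℝ)^(-m) := one_mul _
    calc |m / 2 * (n:ℝ) ^ (-m) * |s| ^ 2 * Real.sign s - 1/(m+1) * (|s| ^ m * s)|
        ≤ |m / 2 * (n:ℝ) ^ (-m) * |s| ^ 2 * Real.sign s| + |1/(m+1) * (|s| ^ m * s)| :=
          abs_sub _ _
      _ ≤ m/2 * (n:ℝ)^(-m) + (n:ℝ)^(-m) := add_le_add key1 key2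
      _ ≤ (m + (m-1)*K + 2) * (n:ℝ) ^ (-m) := by nlinarith
  · rw [if_neg h]
    push_neg at h
    have hinv : (0:ℝ) < 1/(n:ℝ) := by positivity
    have hspos : 0 < |s| := lt_trans hinv h
    have hsne' : |s| ≠ 0 := ne_of_gt hspos
    have habs : |s| * Real.sign s = s := by rw [mul_comm]; exact sign_mul_abs' s
    have hrw : |s| ^ m * s = |s| ^ (m+1) * Real.sign s := by
      rw [Real.rpow_add_one hsne' m, mul_assoc, habs]
    rw [hrw]
    have hdiff : ((m - 1) * (n:ℝ) ^ (-m) * (|s| - 1/(n:ℝ)) +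
        1/(m+1) * (|s| ^ (m+1) - (n:ℝ) ^ (-(m+1)))) * Real.sign s
        - 1/(m+1) * (|s| ^ (m+1) * Real.sign s)
        = ((m - 1) * (n:ℝ) ^ (-m) * (|s| - 1/(n:ℝ)) - 1/(m+1) * (n:ℝ) ^ (-(m+1))) * Real.sign s := by
      ring
    rw [hdiff, abs_mul]
    have hNm1 : (n:ℝ) ^ (-(m+1)) ≤ (n:ℝ) ^ (-m) :=
      Real.rpow_le_rpow_of_exponent_le hN1 (by linarith)
    have hNm1' : (0:ℝ) < (n:ℝ) ^ (-(m+1)) := Real.rpow_pos_of_pos hN0 _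
    have hb : |(m - 1) * (n:ℝ) ^ (-m) * (|s| - 1/(n:ℝ)) - 1/(m+1) * (n:ℝ) ^ (-(m+1))|
        ≤ ((m-1)*K + 1) * (n:ℝ)^(-m) := by
      have ha0 : 0 ≤ (m - 1) * (n:ℝ) ^ (-m) * (|s| - 1/(n:ℝ)) := by
        apply mul_nonneg (mul_nonneg (by linarith) hNm.le); linarith
      have ha1 : (m - 1) * (n:ℝ) ^ (-m) * (|s| - 1/(n:ℝ)) ≤ (m-1)*K*(n:ℝ)^(-m) := by
        nlinarith [mul_nonneg (mul_nonneg (by linarith : (0:ℝ) ≤ m-1) hNm.le)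
          (by linarith : (0:ℝ) ≤ K - (|s| - 1/(n:ℝ)))]
      have hb1 : 1/(m+1) * (n:ℝ) ^ (-(m+1)) ≤ 1 * (n:ℝ)^(-m) := by
        apply mul_le_mul _ hNm1 hNm1'.le zero_le_one
        rw [div_le_one hm1]; linarith
      have hb0 : 0 < 1/(m+1) * (n:ℝ) ^ (-(m+1)) :=
        mul_pos (one_div_pos.mpr hm1) hNm1'
      have hexp : ((m-1)*K + 1) * (n:ℝ)^(-m) = (m-1)*K*(n:ℝ)^(-m) + (n:ℝ)^(-m) := by ring
      rw [abs_le, hexp]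
      constructor <;> linarith
    calc |(m - 1) * (n:ℝ) ^ (-m) * (|s| - 1/(n:ℝ)) - 1/(m+1) * (n:ℝ) ^ (-(m+1))| * |Real.sign s|
        ≤ (((m-1)*K + 1) * (n:ℝ)^(-m)) * 1 :=
          mul_le_mul hb hsgn hsgn0 (mul_nonneg (by nlinarith : (0:ℝ) ≤ (m-1)*K+1) hNm.le)
      _ = ((m-1)*K + 1) * (n:ℝ)^(-m) := mul_one _
      _ ≤ (m + (m-1)*K + 2) * (n:ℝ) ^ (-m) := by nlinarith

/-- Uniform approximation of the odd power `|s|^m s / (m+1)` by `Φ_n`. -/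
theorem stmt7 (m K : ℝ) (hm : 1 < m) (hK : 0 < K) :
    ∃ C4 : ℝ, 0 < C4 ∧
      ∀ (n n1 n2 : ℕ), 1 ≤ n → K ≤ (n:ℝ) → n ≤ n1 → n ≤ n2 →
        ∀ s1 s2 : ℝ, |s1| ≤ K → |s2| ≤ K →
          1/(m+1) * abs (|s1| ^ m * s1 - |s2| ^ m * s2) ≤
            C4 * (n:ℝ) ^ (-m) + |Phi m n1 s1 - Phi m n2 s2| := by
  set C : ℝ := m + (m-1)*K + 2 with hC
  have hCpos : 0 < C := by nlinarith
  refine ⟨2*C, by linarith, ?_⟩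
  intro n n1 n2 hn hKn hn1 hn2 s1 s2 hs1 hs2
  have hN1 : (1:ℝ) ≤ (n:ℝ) := by exact_mod_cast hn
  have hN0 : (0:ℝ) < (n:ℝ) := by linarith
  have hn1' : 1 ≤ n1 := le_trans hn hn1
  have hn2' : 1 ≤ n2 := le_trans hn hn2
  have hle1 : (n:ℝ) ≤ (n1:ℝ) := by exact_mod_cast hn1
  have hle2 : (n:ℝ) ≤ (n2:ℝ) := by exact_mod_cast hn2
  have hmono : ∀ k : ℕ, (n:ℝ) ≤ (k:ℝ) → (k:ℝ)^(-m) ≤ (n:ℝ)^(-m) := by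
    intro k hk
    rw [Real.rpow_neg (by linarith), Real.rpow_neg hN0.le]
    exact inv_anti₀ (Real.rpow_pos_of_pos hN0 m)
      (Real.rpow_le_rpow hN0.le hk (by linarith))
  have k1 := key m K hm hK n1 hn1' (le_trans hKn hle1) s1 hs1
  have k2 := key m K hm hK n2 hn2' (le_trans hKn hle2) s2 hs2
  have b1 : |Phi m n1 s1 - 1/(m+1) * (|s1| ^ m * s1)| ≤ C * (n:ℝ)^(-m) := by
    refine le_trans k1 ?_
    exact mul_le_mul_of_nonneg_left (hmono n1 hle1) hCpos.le
  have b2 : |Phi m n2 s2 - 1/(m+1) * (|s2| ^ m * s2)| ≤ C * (n:ℝ)^(-m) := by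
    refine le_trans k2 ?_
    exact mul_le_mul_of_nonneg_left (hmono n2 hle2) hCpos.le
  have hm1 : (0:ℝ) < m + 1 := by linarith
  have heq : 1/(m+1) * |(|s1| ^ m * s1 - |s2| ^ m * s2)|
      = |1/(m+1) * (|s1| ^ m * s1) - 1/(m+1) * (|s2| ^ m * s2)| := by
    rw [← mul_sub, abs_mul, abs_of_pos (by positivity : (0:ℝ) < 1/(m+1))]
  rw [heq]
  have tri1 := abs_sub_le (1/(m+1) * (|s1| ^ m * s1)) (Phi m n1 s1)
    (1/(m+1) * (|s2| ^ m * s2))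
  have tri2 := abs_sub_le (Phi m n1 s1) (Phi m n2 s2) (1/(m+1) * (|s2| ^ m * s2))
  have c1 : |1/(m+1) * (|s1| ^ m * s1) - Phi m n1 s1|
      = |Phi m n1 s1 - 1/(m+1) * (|s1| ^ m * s1)| := abs_sub_comm _ _
  have c2 : |Phi m n2 s2 - 1/(m+1) * (|s2| ^ m * s2)|
      = |1/(m+1) * (|s2| ^ m * s2) - Phi m n2 s2| := abs_sub_comm _ _
  linarith [tri1, tri2, b1, b2, c1.le, c2.le, c1.ge, c2.ge]
end

section
/- Let $\{\mu_n\}$ be a nondecreasing sequence of finite nonnegative Borel measures on a Polish space $X$ converging to a finite measure $\mu$ in total variation (or setwise). Suppose each $\mu_n$ decomposes as $\mu_n=\mu_{n,0}+\mu_{n,s}$ and $\mu=\mu_0+\mu_s$, where $\mu_{n,0},\mu_0$ vanish on every set in a fixed $\sigma$-ideal $\mathcal{N}$ of Borel sets (the 'capacity-null' sets) and $\mu_{n,s},\mu_s$ are each concentrated on some set in $\mathcal{N}$. Then $\{\mu_{n,s}\}$ is nondecreasing and converges to $\mu_s$ setwise, and $\{\mu_{n,0}\}$ is nondecreasing and converges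 to $\mu_0$ setwise. -/
/-- Monotone stability of the decomposition `μ = μ₀ + μ_s` relative to a σ-ideal of
capacity-null sets (abstract form of Proposition 3.7 of the paper). -/
theorem stmt18 {X : Type*} [TopologicalSpace X] [PolishSpace X] [MeasurableSpace X]
    [BorelSpace X] (𝒩 : Set (Set X))
    (hNmeas : ∀ E ∈ 𝒩, MeasurableSet E)
    (hNunion : ∀ f : ℕ → Set X, (∀ i, f i ∈ 𝒩) → (⋃ i, f i) ∈ 𝒩)
    (hNsub : ∀ E ∈ 𝒩, ∀ F : Set X, F ⊆ E → MeasurableSet F → F ∈ 𝒩)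
    (μn μn0 μns : ℕ → MeasureTheory.Measure X) (μ μ0 μs : MeasureTheory.Measure X)
    (hfin : ∀ n, MeasureTheory.IsFiniteMeasure (μn n))
    (hfin' : MeasureTheory.IsFiniteMeasure μ)
    (hdec : ∀ n, μn n = μn0 n + μns n) (hdec' : μ = μ0 + μs)
    (h0 : ∀ n, ∀ E ∈ 𝒩, μn0 n E = 0) (h0' : ∀ E ∈ 𝒩, μ0 E = 0)
    (hs : ∀ n, ∃ E ∈ 𝒩, μns n Eᶜ = 0) (hs' : ∃ E ∈ 𝒩, μs Eᶜ = 0)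
    (hmono : ∀ n, μn n ≤ μn (n+1))
    (hconv : ∀ s : Set X, MeasurableSet s →
      Filter.Tendsto (fun n => μn n s) Filter.atTop (nhds (μ s))) :
    (∀ n, μns n ≤ μns (n+1)) ∧
    (∀ s : Set X, MeasurableSet s →
      Filter.Tendsto (fun n => μns n s) Filter.atTop (nhds (μs s))) ∧
    (∀ n, μn0 n ≤ μn0 (n+1)) ∧
    (∀ s : Set X, MeasurableSet s →
      Filter.Tendsto (fun n => μn0 n s) Filter.atTop (nhds (μ0 s))) := by
  classical
  choose g hg hgnull using hs
  obtain ⟨E, hE, hEnull⟩ := hs'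
  set f : ℕ → Set X := fun i => Nat.rec E (fun n _ => g n) i with hf
  have hfN : ∀ i, f i ∈ 𝒩 := by rintro (_ | i); exacts [hE, hg i]
  set F : Set X := ⋃ i, f i with hFdef
  have hFN : F ∈ 𝒩 := hNunion f hfN
  have hFm : MeasurableSet F := hNmeas F hFN
  have hsubE : E ⊆ F := Set.subset_iUnion f 0
  have hsubg : ∀ n, g n ⊆ F := fun n => Set.subset_iUnion f (n + 1)
  have key : ∀ n s, MeasurableSet s →
      μns n s = μn n (s ∩ F) ∧ μn0 n s = μn n (s \ F) := by
    intro n s hsm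
    have h1 : μn0 n (s ∩ F) = 0 :=
      h0 n _ (hNsub F hFN _ Set.inter_subset_right (hsm.inter hFm))
    have h2 : μns n (s \ F) = 0 :=
      MeasureTheory.measure_mono_null (fun x hx hxg => hx.2 (hsubg n hxg)) (hgnull n)
    constructor
    · calc μns n s = μns n (s ∩ F) + μns n (s \ F) :=
            (MeasureTheory.measure_inter_add_diff s hFm).symm
        _ = μn0 n (s ∩ F) + μns n (s ∩ F) := by simp [h1, h2]
        _ = μn n (s ∩ F) := by rw [hdec n]; rfl
    · calc μn0 n s = μn0 n (s ∩ F) + μn0 n (s \ F) :=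
            (MeasureTheory.measure_inter_add_diff s hFm).symm
        _ = μn0 n (s \ F) + μns n (s \ F) := by simp [h1, h2]
        _ = μn n (s \ F) := by rw [hdec n]; rfl
  have key' : ∀ s : Set X, MeasurableSet s →
      μs s = μ (s ∩ F) ∧ μ0 s = μ (s \ F) := by
    intro s hsm
    have h1 : μ0 (s ∩ F) = 0 :=
      h0' _ (hNsub F hFN _ Set.inter_subset_right (hsm.inter hFm))
    have h2 : μs (s \ F) = 0 :=
      MeasureTheory.measure_mono_null (fun x hx hxE => hx.2 (hsubE hxE)) hEnull
    constructor
    · calc μs s = μs (s ∩ F) + μs (s \ F) := (MeasureTheory.measure_inter_add_diff s hFm).symm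
        _ = μ0 (s ∩ F) + μs (s ∩ F) := by simp [h1, h2]
        _ = μ (s ∩ F) := by rw [hdec']; rfl
    · calc μ0 s = μ0 (s ∩ F) + μ0 (s \ F) := (MeasureTheory.measure_inter_add_diff s hFm).symm
        _ = μ0 (s \ F) + μs (s \ F) := by simp [h1, h2]
        _ = μ (s \ F) := by rw [hdec']; rfl
  refine ⟨?_, ?_, ?_, ?_⟩
  · intro n
    refine MeasureTheory.Measure.le_iff.mpr fun s hsm => ?_
    rw [(key n s hsm).1, (key (n + 1) s hsm).1]
    exact MeasureTheory.Measure.le_iff.mp (hmono n) _ (hsm.inter hFm)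
  · intro s hsm
    have : (fun n => μns n s) = fun n => μn n (s ∩ F) :=
      funext fun n => (key n s hsm).1
    rw [this, (key' s hsm).1]
    exact hconv _ (hsm.inter hFm)
  · intro n
    refine MeasureTheory.Measure.le_iff.mpr fun s hsm => ?_
    rw [(key n s hsm).2, (key (n + 1) s hsm).2]
    exact MeasureTheory.Measure.le_iff.mp (hmono n) _ (hsm.diff hFm)
  · intro s hsm
    have : (fun n => μn0 n s) = fun n => μn n (s \ F) :=
      funext fun n => (key n s hsm).2
    rw [this, (key' s hsm).2]
    exact hconv _ (hsm.diff hFm)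
end
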